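/- Let B be a dual Banach algebra with predual B_* and M = (M_*)* a normal dual B-bimodule, where M_* is a sub-B-bimodule of M*. Then the triangular Banach algebra T(B,M) is a dual Banach algebra with predual B_* ⊕_∞ M_*: that is, B_* ⊕_∞ M_* is a closed sub-T(B,M)-bimodule of (T(B,M))* ≅ B* ⊕_∞ M*. -/
import Mathlib
open NormedSpace ContinuousLinearMap

noncomputable section

def wstar {E : Type*} [NormedAddCommGroup E] [NormedSpace ℂ E]
    (P : Submodule ℂ (E →L[ℂ] ℂ)) : TopologicalSpace E :=
  TopologicalSpace.induced (fun x (p : P) => (p : E →L[ℂ] ℂ) x) inferInstance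

lemma wstar_eval_continuous {E : Type*} [NormedAddCommGroup E] [NormedSpace ℂ E]
    (P : Submodule ℂ (E →L[ℂ] ℂ)) (p : P) :
    @Continuous E ℂ (wstar P) _ (fun x => (p : E →L[ℂ] ℂ) x) := by
  have h1 : @Continuous E (P → ℂ) (wstar P) Pi.topologicalSpace
      (fun x (q : P) => (q : E →L[ℂ] ℂ) x) := by
    unfold wstar; exact continuous_induced_dom
  exact @Continuous.comp E (P → ℂ) ℂ (wstar P) _ _ _ _ (continuous_apply p) h1

lemma mem_of_wstar_continuous {E : Type*} [NormedAddCommGroup E] [NormedSpace ℂ E]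
    (P : Submodule ℂ (E →L[ℂ] ℂ)) (f : E →L[ℂ] ℂ)
    (hf : @Continuous E ℂ (wstar P) _ (fun x => f x)) : f ∈ P := by
  have hmem : (fun x => f x) ⁻¹' (Metric.ball (0:ℂ) 1) ∈ @nhds E (wstar P) 0 := by
    have h := @Continuous.continuousAt E ℂ (wstar P) _ _ 0 hf
    have := h (Metric.ball_mem_nhds (f 0) one_pos)
    simpa [map_zero] using this
  have hmem' : (fun x => f x) ⁻¹' (Metric.ball (0:ℂ) 1) ∈
      Filter.comap (fun x (p : P) => (p : E →L[ℂ] ℂ) x)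
        (nhds (fun p : P => (p : E →L[ℂ] ℂ) 0)) := by
    rw [← nhds_induced]; exact hmem
  obtain ⟨s, hs, hsub⟩ := Filter.mem_comap.mp hmem'
  have hg0 : (fun p : P => (p : E →L[ℂ] ℂ) 0) = fun _ => (0:ℂ) := by
    funext p; simp
  rw [hg0, nhds_pi] at hs
  obtain ⟨I, t, ht, htsub⟩ := Filter.mem_pi'.mp hs
  have hker : ∀ x : E, (∀ p ∈ I, ((p : P) : E →L[ℂ] ℂ) x = 0) → f x = 0 := by
    intro x hx
    by_contra hfx
    obtain ⟨c, hc⟩ : ∃ c : ℂ, 1 ≤ ‖f (c • x)‖ := by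
      refine ⟨(f x)⁻¹, ?_⟩
      rw [map_smul, smul_eq_mul, inv_mul_cancel₀ hfx]
      simp
    have hmem2 : (fun p : P => (p : E →L[ℂ] ℂ) (c • x)) ∈ Set.pi ↑I t := by
      intro p hp
      show (p : E →L[ℂ] ℂ) (c • x) ∈ t p
      have h0 : (p : E →L[ℂ] ℂ) (c • x) = 0 := by
        rw [map_smul, hx p hp]; simp
      rw [h0]
      exact mem_of_mem_nhds (ht p)
    have := hsub (htsub hmem2)
    simp only [Set.mem_preimage, Metric.mem_ball, dist_zero_right] at this
    exact absurd hc (not_le.mpr this)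
  have hspan : (f : E →ₗ[ℂ] ℂ) ∈ Submodule.span ℂ
      (Set.range (fun i : I => (((i : P) : E →L[ℂ] ℂ) : E →ₗ[ℂ] ℂ))) := by
    apply mem_span_of_iInf_ker_le_ker
    intro x hx
    simp only [Submodule.mem_iInf, LinearMap.mem_ker] at hx ⊢
    exact hker x (fun p hp => hx ⟨p, hp⟩)
  have hle : Submodule.span ℂ
      (Set.range (fun i : I => (((i : P) : E →L[ℂ] ℂ) : E →ₗ[ℂ] ℂ)))
      ≤ P.map (ContinuousLinearMap.coeLM ℂ) := by
    rw [Submodule.span_le]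
    rintro _ ⟨i, rfl⟩
    exact ⟨((i : P) : E →L[ℂ] ℂ), (i : P).2, rfl⟩
  obtain ⟨g', hg', hgf⟩ := hle hspan
  have : g' = f := ContinuousLinearMap.coe_injective hgf
  rwa [← this]

/-- The canonical evaluation map `E → P*` coming from a subspace `P ⊆ E*`. -/
def evIntoPredual {E : Type*} [NormedAddCommGroup E] [NormedSpace ℂ E]
    (P : Submodule ℂ (E →L[ℂ] ℂ)) (x : E) : P →L[ℂ] ℂ :=
  (inclusionInDoubleDual ℂ E x).comp P.subtypeL

/-- if `B = (B_*)*` is a dual Banach algebra and `M = (M_*)*` is a normal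
dual `B`-bimodule (with `M_*` a sub-`B`-bimodule of `M*` and weak*-weak* continuous orbit
maps), then the triangular Banach algebra `T(B,M)` is a dual Banach algebra with predual
`B_* ⊕_∞ M_*`: the latter is a sub-`T(B,M)`-bimodule of `T(B,M)* ≅ B* ⊕_∞ M*`. -/
theorem normal_implies_triangular_dual
    (B M : Type*) [NormedRing B] [NormedAlgebra ℂ B] [CompleteSpace B]
    [NormedAddCommGroup M] [NormedSpace ℂ M] [CompleteSpace M]
    -- B is a dual Banach algebra with predual P:
    (P : Submodule ℂ (B →L[ℂ] ℂ)) (hPc : IsClosed (P : Set (B →L[ℂ] ℂ)))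
    (hPsub : ∀ (b : B), ∀ φ ∈ P, φ.comp ((mul ℂ B).flip b) ∈ P ∧ φ.comp (mul ℂ B b) ∈ P)
    (hPbij : Function.Bijective (evIntoPredual P))
    -- M is a contractive Banach B-bimodule:
    (l r : B →L[ℂ] M →L[ℂ] M)
    (hl : ∀ a b x, l (a * b) x = l a (l b x))
    (hr : ∀ a b x, r (a * b) x = r b (r a x))
    (hlr : ∀ a b x, l a (r b x) = r b (l a x))
    (hlc : ∀ a x, ‖l a x‖ ≤ ‖a‖ * ‖x‖)
    (hrc : ∀ a x, ‖r a x‖ ≤ ‖x‖ * ‖a‖)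
    -- M is a dual space with predual Q, a sub-B-bimodule of M*:
    (Q : Submodule ℂ (M →L[ℂ] ℂ)) (hQc : IsClosed (Q : Set (M →L[ℂ] ℂ)))
    (hQbij : Function.Bijective (evIntoPredual Q))
    (hQsub : ∀ (b : B), ∀ ψ ∈ Q, ψ.comp (r b) ∈ Q ∧ ψ.comp (l b) ∈ Q)
    -- normality: orbit maps are weak*-weak* continuous:
    (hnormal : ∀ y : M, @Continuous B M (wstar P) (wstar Q) (fun b => l b y) ∧
               @Continuous B M (wstar P) (wstar Q) (fun b => r b y)) :
    ∀ (b : B) (y : M), ∀ φ ∈ P, ∀ ψ ∈ Q,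
      (∃ φ' ∈ P, ∃ ψ' ∈ Q, ∀ (a : B) (x : M),
          φ (a * b) + ψ (l a y) + ψ (r b x) = φ' a + ψ' x) ∧
      (∃ φ' ∈ P, ∃ ψ' ∈ Q, ∀ (a : B) (x : M),
          φ (b * a) + ψ (l b x) + ψ (r a y) = φ' a + ψ' x) := by
  intro b y φ hφ ψ hψ
  have hlift : ∀ (F : B →L[ℂ] M) (hF : @Continuous B M (wstar P) (wstar Q) (fun a => F a)),
      ψ.comp F ∈ P := by
    intro F hF
    apply mem_of_wstar_continuous
    have h1 : @Continuous B ℂ (wstar P) _ (fun a => ψ (F a)) :=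
      @Continuous.comp B M ℂ (wstar P) (wstar Q) _ _ _
        (wstar_eval_continuous Q ⟨ψ, hψ⟩) hF
    have he : (fun a => (ψ.comp F) a) = fun a => ψ (F a) := by
      funext a; simp
    rw [he]; exact h1
  have hly : ψ.comp (l.flip y) ∈ P := by
    apply hlift
    have he : (fun a => (l.flip y) a) = fun a => l a y := by funext a; simp
    rw [he]; exact (hnormal y).1
  have hry : ψ.comp (r.flip y) ∈ P := by
    apply hlift
    have he : (fun a => (r.flip y) a) = fun a => r a y := by funext a; simp
    rw [he]; exact (hnormal y).2
  constructor
  · refine ⟨φ.comp ((mul ℂ B).flip b) + ψ.comp (l.flip y),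
      P.add_mem (hPsub b φ hφ).1 hly, ψ.comp (r b), (hQsub b ψ hψ).1, ?_⟩
    intro a x
    simp only [ContinuousLinearMap.add_apply, ContinuousLinearMap.comp_apply,
      ContinuousLinearMap.flip_apply, ContinuousLinearMap.mul_apply']
    try ring
  · refine ⟨φ.comp (mul ℂ B b) + ψ.comp (r.flip y),
      P.add_mem (hPsub b φ hφ).2 hry, ψ.comp (l b), (hQsub b ψ hψ).2, ?_⟩
    intro a x
    simp only [ContinuousLinearMap.add_apply, ContinuousLinearMap.comp_apply,
      ContinuousLinearMap.flip_apply, ContinuousLinearMap.mul_apply']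
    try ring

end
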